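/- If α lies in Λ²₇ or in Λ²₁₄ and the pullback of α to the hyperplane {t = 0} = ℂ³ ⊂ ℝ⁷ vanishes (that is, α(u,w) = 0 for all u, w ∈ ℂ³), then α = 0. -/

import Mathlib

/- STATEMENT 7: if α lies in Λ²₇ or in Λ²₁₄ and the pullback of α to the hyperplane
{t = 0} = ℂ³ ⊂ ℝ⁷ vanishes (i.e. α(u,w) = 0 for all u, w ∈ ℂ³), then α = 0.

We identify duals with the underlying spaces via the standard bases, so forms are elements
of the exterior algebras of `V7 = Fin 7 → ℝ` and (for the hyperplane) `V6 = Fin 6 → ℝ`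
(wedge = multiplication).  Coordinates on ℝ⁷: `t = ε 0, x₁ = ε 1, …, y₃ = ε 6`.
`Res : E7 →ₐ E6` is pullback of forms under the inclusion ℂ³ = {t = 0} ↪ ℝ⁷; for a 2-form
α, `Res α = 0` says exactly that α(u,w) = 0 for all u, w in the hyperplane. -/

noncomputable section
open ExteriorAlgebra

abbrev V6 : Type := Fin 6 → ℝ
abbrev E6 : Type := ExteriorAlgebra ℝ V6
abbrev V7 : Type := Fin 7 → ℝ
abbrev E7 : Type := ExteriorAlgebra ℝ V7

def ε (i : Fin 7) : E7 := ExteriorAlgebra.ι ℝ (Pi.single i 1)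

/-- Contraction (interior product) `ι_v` with the vector `v`, in the first slot. -/
def ctr (v : V7) : E7 →ₗ[ℝ] E7 :=
  CliffordAlgebra.contractLeft ((Pi.basisFun ℝ (Fin 7)).toDual v)

def ω : E7 := ε 1 * ε 2 + ε 3 * ε 4 + ε 5 * ε 6
def ρ : E7 := -(ε 2 * ε 4 * ε 6) + ε 2 * ε 3 * ε 5 + ε 1 * ε 4 * ε 5 + ε 1 * ε 3 * ε 6
def φ₀ : E7 := ω * ε 0 + ρ

/-- The dual-coordinate restriction map `V7 → V6` (dual to the inclusion of the
hyperplane {t = 0}, where t has index 0). -/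
def proj : V7 →ₗ[ℝ] V6 := LinearMap.funLeft ℝ ℝ Fin.succ

/-- Pullback (restriction) of forms on ℝ⁷ to the hyperplane {t = 0} = ℂ³. -/
def Res : E7 →ₐ[ℝ] E6 :=
  ExteriorAlgebra.lift ℝ ⟨(ExteriorAlgebra.ι ℝ).comp proj, fun _ =>
    ExteriorAlgebra.ι_sq_zero _⟩

/-- The linear map `v ↦ ι_vφ₀`. -/
def iotaPhi : V7 →ₗ[ℝ] E7 :=
  ((CliffordAlgebra.contractLeft (Q := (0 : QuadraticForm ℝ V7))).flip φ₀) ∘ₗ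
    (Pi.basisFun ℝ (Fin 7)).toDual

/-- `Λ²₇ = {ι_vφ₀ : v ∈ ℝ⁷}`. -/
def Λ27 : Submodule ℝ E7 := LinearMap.range iotaPhi

/-- `Λ²₁₄ = {α a 2-form : α ∧ ι_vφ₀ ∧ φ₀ = 0 for all v}`. -/
def Λ14 : Submodule ℝ E7 where
  carrier := {α | α ∈ ⋀[ℝ]^2 V7 ∧ ∀ v : V7, α * ctr v φ₀ * φ₀ = 0}
  add_mem' := by
    rintro a b ⟨ha2, ha⟩ ⟨hb2, hb⟩
    exact ⟨add_mem ha2 hb2, fun v => by rw [add_mul, add_mul, ha v, hb v, add_zero]⟩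
  zero_mem' := ⟨zero_mem _, fun v => by rw [zero_mul, zero_mul]⟩
  smul_mem' := by
    rintro c a ⟨ha2, ha⟩
    exact ⟨Submodule.smul_mem _ c ha2,
      fun v => by rw [smul_mul_assoc, smul_mul_assoc, ha v, smul_zero]⟩

/-! Let `hyperplanePart` be the algebra endomorphism of `E7` that restricts a form to the
hyperplane `{t = 0}` and extends it back, i.e. sends `dt` to `0`; it kills every `α` with
`Res α = 0`.

For `α = ι_vφ₀` this reads `v₀ ω + ι_vρ = 0`, and evaluating on suitable pairs of basis vectors
of `ℂ³` recovers every coordinate of `v`.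

A 2-form killed by `hyperplanePart` has the shape `dt ∧ γ`. If it lies in `Λ²₁₄`, the defining
condition for `v = eᵢ` (`i ≠ 0`) loses its `dt` after contracting with `∂_t` and applying
`hyperplanePart`, leaving `γ ∧ ι_{eᵢ}ρ ∧ ρ = 0`; the coefficient of `dx₁ ∧ ⋯ ∧ dy₃` in it is
`±2` times the coordinate of `γ` paired with `i` by the complex structure. -/

section BasisForms

variable {R ι : Type*} [CommRing R] [Fintype ι] [DecidableEq ι]

theorem Pi.basisFun_toDual_single (v : ι → R) (i : ι) :
    (Pi.basisFun R ι).toDual v (Pi.single i 1) = v i := by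
  rw [← Pi.basisFun_apply, Module.Basis.toDual_apply_left, Pi.basisFun_repr]

theorem ExteriorAlgebra.ι_eq_sum_single (w : ι → R) :
    ExteriorAlgebra.ι R w = ∑ i, w i • ExteriorAlgebra.ι R (Pi.single i 1) := by
  conv_lhs => rw [← (Pi.basisFun R ι).sum_repr w]
  simp

theorem ExteriorAlgebra.exists_eq_sum_of_mem_two {α : ExteriorAlgebra R (ι → R)}
    (hα : α ∈ ⋀[R]^2 (ι → R)) :
    ∃ c : ι → ι → R, α = ∑ k, ∑ l,
      c k l • (ExteriorAlgebra.ι R (Pi.single k 1) * ExteriorAlgebra.ι R (Pi.single l 1)) := by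
  set e : ι → ExteriorAlgebra R (ι → R) := fun i => ExteriorAlgebra.ι R (Pi.single i 1)
  suffices α ∈ Submodule.span R (Set.range fun p : ι × ι => e p.1 * e p.2) by
    obtain ⟨c, hc⟩ := Submodule.mem_span_range_iff_exists_fun R |>.mp this
    exact ⟨fun k l => c (k, l), by rw [← hc, Fintype.sum_prod_type]⟩
  rw [← ExteriorAlgebra.ιMulti_span_fixedDegree] at hα
  refine Submodule.span_le.mpr ?_ hα
  rintro _ ⟨f, rfl⟩
  rw [ExteriorAlgebra.ιMulti_apply, List.ofFn_succ, List.ofFn_succ, List.ofFn_zero,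
    List.prod_cons, List.prod_cons, List.prod_nil, mul_one, ExteriorAlgebra.ι_eq_sum_single (f 0),
    ExteriorAlgebra.ι_eq_sum_single (f _), Finset.sum_mul_sum]
  refine Submodule.sum_mem _ fun k _ => Submodule.sum_mem _ fun l _ => ?_
  rw [smul_mul_smul_comm]
  exact Submodule.smul_mem _ _ (Submodule.subset_span ⟨(k, l), rfl⟩)

end BasisForms

theorem ctr_ε_mul (v : V7) (i : Fin 7) (x : E7) : ctr v (ε i * x) = v i • x - ε i * ctr v x := by
  rw [ctr, ε, CliffordAlgebra.contractLeft_ι_mul, Pi.basisFun_toDual_single]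

theorem ctr_ε (v : V7) (i : Fin 7) : ctr v (ε i) = algebraMap ℝ E7 (v i) := by
  rw [ctr, ε, CliffordAlgebra.contractLeft_ι, Pi.basisFun_toDual_single]

theorem ctr_algebraMap (v : V7) (r : ℝ) : ctr v (algebraMap ℝ E7 r) = 0 :=
  CliffordAlgebra.contractLeft_algebraMap _ _ r

theorem ε_mul_self (i : Fin 7) : ε i * ε i = 0 := ExteriorAlgebra.ι_sq_zero _

theorem ε_mul_ε_anticomm (i j : Fin 7) : ε j * ε i = -(ε i * ε j) :=
  eq_neg_of_add_eq_zero_left (ExteriorAlgebra.ι_add_mul_swap _ _)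

theorem iotaPhi_apply (v : V7) : iotaPhi v = ctr v φ₀ := rfl

def extendByZero : V6 →ₗ[ℝ] V7 := (Pi.basisFun ℝ (Fin 6)).constr ℝ fun i => Pi.single i.succ 1

def hyperplanePart : E7 →ₐ[ℝ] E7 := (ExteriorAlgebra.map extendByZero).comp Res

theorem hyperplanePart_ε (i : Fin 7) : hyperplanePart (ε i) = if i = 0 then 0 else ε i := by
  rw [hyperplanePart, AlgHom.comp_apply, Res, ε, ExteriorAlgebra.lift_ι_apply, LinearMap.comp_apply,
    ExteriorAlgebra.map_apply_ι]
  induction i using Fin.cases with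
  | zero =>
    have : proj (Pi.single 0 1) = 0 := by
      funext j
      simp [proj, Fin.succ_ne_zero]
    simp [this]
  | succ j =>
    have : proj (Pi.single j.succ 1) = Pi.basisFun ℝ (Fin 6) j := by
      funext k
      simp [proj, Pi.single_apply]
    simp [this, extendByZero, Fin.succ_ne_zero]

theorem hyperplanePart_eq_zero_of_ε_zero_mul_eq_zero {y : E7} (h : ε 0 * y = 0) :
    hyperplanePart y = 0 := by
  simpa [ctr_ε_mul, hyperplanePart_ε] using congrArg (hyperplanePart ∘ ctr (Pi.single 0 1)) h

theorem hyperplanePart_φ₀ : hyperplanePart φ₀ = ρ := by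
  simp only [φ₀, ω, ρ, map_add, map_neg, map_mul, hyperplanePart_ε, Fin.isValue, Fin.reduceEq,
    reduceIte, mul_zero, zero_add]

theorem hyperplanePart_ctr_φ₀ (v : V7) : hyperplanePart (ctr v φ₀) = v 0 • ω + ctr v ρ := by
  simp only [φ₀, ω, ρ, add_mul, mul_assoc, map_add, map_neg, map_smul, map_mul, map_sub, ctr_ε_mul,
    ctr_ε, hyperplanePart_ε, Fin.isValue, Fin.reduceEq, reduceIte, mul_zero,
    smul_zero, zero_sub, Algebra.algebraMap_eq_smul_one, mul_smul_comm, mul_one, mul_sub]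
  module

theorem ε_mul_ε_sub_hyperplanePart (k l : Fin 7) :
    ε k * ε l - hyperplanePart (ε k * ε l) =
      ε 0 * ((if k = 0 then ε l else 0) - if l = 0 then ε k else 0) := by
  rw [map_mul, hyperplanePart_ε, hyperplanePart_ε]
  by_cases hk : k = 0 <;> by_cases hl : l = 0
  · simp [hk, hl, ε_mul_self]
  · simp [hk, hl]
  · simp [hk, hl, ε_mul_ε_anticomm 0 k]
  · simp [hk, hl]

theorem exists_eq_ε_zero_mul_of_hyperplanePart_eq_zero {α : E7} (hα : α ∈ ⋀[ℝ]^2 V7)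
    (h : hyperplanePart α = 0) : ∃ b : Fin 7 → ℝ, α = ε 0 * ∑ l, b l • ε l := by
  obtain ⟨c, rfl⟩ := ExteriorAlgebra.exists_eq_sum_of_mem_two hα
  change hyperplanePart (∑ k, ∑ l, c k l • (ε k * ε l)) = 0 at h
  refine ⟨fun l => c 0 l - c l 0, ?_⟩
  calc ∑ k, ∑ l, c k l • (ε k * ε l)
      = ∑ k, ∑ l, c k l • (ε k * ε l) - hyperplanePart (∑ k, ∑ l, c k l • (ε k * ε l)) := by
        rw [h, sub_zero]
    _ = ∑ k, ∑ l, c k l • (ε 0 * ((if k = 0 then ε l else 0) - if l = 0 then ε k else 0)) := by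
        simp only [map_sum, map_smul, ← Finset.sum_sub_distrib, ← smul_sub,
          ε_mul_ε_sub_hyperplanePart]
    _ = ε 0 * ∑ l, (c 0 l - c l 0) • ε l := by
        simp [Finset.mul_sum, mul_sub, smul_sub, sub_smul, Finset.sum_sub_distrib]

theorem eq_zero_of_smul_ω_add_ctr_ρ_eq_zero {v : V7} (h : v 0 • ω + ctr v ρ = 0) : v = 0 := by
  have value (i j : Fin 7) := congrArg
    (fun x => ExteriorAlgebra.algebraMapInv (ctr (Pi.single j 1) (ctr (Pi.single i 1) x))) h
  -- `(e₁, e₂)` only sees `ω`; each other pair meets exactly one monomial of `ι_vρ`.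
  have h0 := value 1 2
  have h1 := value 4 5
  have h2 := value 3 5
  have h3 := value 2 5
  have h4 := value 2 6
  have h5 := value 2 3
  have h6 := value 1 3
  simp only [ω, ρ, mul_assoc, map_add, map_neg, map_sub, map_smul, map_zero, ctr_ε_mul, ctr_ε,
    ctr_algebraMap, Pi.single_apply, Fin.isValue, Fin.reduceEq, reduceIte, mul_zero, zero_mul,
    smul_zero, sub_zero, zero_sub, add_zero, zero_add, neg_zero, neg_neg, AlgHom.commutes, map_one,
    smul_eq_mul, mul_one, one_mul, Algebra.algebraMap_self_apply, neg_eq_zero]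
    at h0 h1 h2 h3 h4 h5 h6
  ext k
  fin_cases k <;> assumption

set_option maxHeartbeats 2000000 in
theorem ε_zero_mul_eq_zero_of_mem_Λ14 (b : Fin 7 → ℝ) (h : ε 0 * ∑ l, b l • ε l ∈ Λ14) :
    ε 0 * ∑ l, b l • ε l = 0 := by
  have wedge (i : Fin 7) (hi : i ≠ 0) :
      hyperplanePart (∑ l, b l • ε l) * (ctr (Pi.single i 1) ρ * ρ) = 0 := by
    have := hyperplanePart_eq_zero_of_ε_zero_mul_eq_zero
      (by simpa only [mul_assoc] using h.2 (Pi.single i 1))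
    rwa [map_mul, map_mul, hyperplanePart_ctr_φ₀, hyperplanePart_φ₀, Pi.single_eq_of_ne hi.symm,
      zero_smul, zero_add] at this
  have top (i : Fin 7) (hi : i ≠ 0) := congrArg (fun x => ExteriorAlgebra.algebraMapInv
    (ctr (Pi.single 6 1) (ctr (Pi.single 5 1) (ctr (Pi.single 4 1) (ctr (Pi.single 3 1)
      (ctr (Pi.single 2 1) (ctr (Pi.single 1 1) x))))))) (wedge i hi)
  have h1 := top 1 (by decide)
  have h2 := top 2 (by decide)
  have h3 := top 3 (by decide)
  have h4 := top 4 (by decide)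
  have h5 := top 5 (by decide)
  have h6 := top 6 (by decide)
  simp only [ρ, Fin.sum_univ_seven, hyperplanePart_ε, map_add, map_neg, map_sub, map_smul, map_zero,
    ctr_ε_mul, ctr_ε, add_mul, mul_add, mul_assoc, smul_mul_assoc, mul_neg, neg_mul, ε_mul_self,
    Pi.single_apply, Fin.isValue, Fin.reduceEq, reduceIte, mul_zero, zero_smul, one_smul, smul_zero,
    sub_zero, zero_sub, add_zero, zero_add, neg_zero, neg_neg, smul_neg, smul_sub, map_one,
    smul_eq_mul, mul_one] at h1 h2 h3 h4 h5 h6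
  simp only [Fin.sum_univ_seven, ε_mul_self, show b 1 = 0 by linarith, show b 2 = 0 by linarith,
    show b 3 = 0 by linarith, show b 4 = 0 by linarith, show b 5 = 0 by linarith,
    show b 6 = 0 by linarith, zero_smul, add_zero, mul_smul_comm, smul_zero]

theorem stmt7 (α : E7) (h : α ∈ Λ27 ∨ α ∈ Λ14) (h0 : Res α = 0) : α = 0 := by
  have hα : hyperplanePart α = 0 := by rw [hyperplanePart, AlgHom.comp_apply, h0, map_zero]
  rcases h with ⟨v, rfl⟩ | hΛ14
  · rw [iotaPhi_apply, hyperplanePart_ctr_φ₀] at hα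
    rw [iotaPhi_apply, eq_zero_of_smul_ω_add_ctr_ρ_eq_zero hα]
    simp [ctr]
  · obtain ⟨b, rfl⟩ := exists_eq_ε_zero_mul_of_hyperplanePart_eq_zero hΛ14.1 hα
    exact ε_zero_mul_eq_zero_of_mem_Λ14 b hΛ14
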